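/- arXiv:2405.07716 — 4 statements merged into one kernel-verified Lean document; each statement's English description precedes it below -/
import Mathlib

section
/- Let r ≥ 3. There is no standard class D = dH − Σ_{i=1}^r m_i E_i with real coordinates (so d ≥ m_1 + m_2 + m_3 and m_1 ≥ ⋯ ≥ m_r ≥ 0) satisfying D² < 0 and D·K_r ≤ 0, i.e. satisfying d² − Σ_{i=1}^r m_i² < 0 and 3d − Σ_{i=1}^r m_i ≥ 0. In particular no standard class satisfies (D², D·K_r) = (−2, 0) or (D², D·K_r) = (−1, −1). -/
/-- **No standard class has `D² < 0` and `D·K ≤ 0`.**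
On the blow-up of the projective plane at `r ≥ 3` points, identify a real divisor
class `D = d·H − ∑ mᵢ·Eᵢ` with `(d, m 1, …, m r)`, so `D² = d² − ∑ mᵢ²` and
`D·K_r = −3d + ∑ mᵢ`.  If `D` is standard (`d ≥ m 1 + m 2 + m 3` and
`m 1 ≥ ⋯ ≥ m r ≥ 0`) then it cannot satisfy `D² < 0` together with `D·K_r ≤ 0`;
in particular it satisfies neither `(D², D·K_r) = (−2, 0)` nor
`(D², D·K_r) = (−1, −1)`. -/
theorem no_standard_class_negative
    (r : ℕ) (hr : 3 ≤ r) (d : ℝ) (m : ℕ → ℝ)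
    (hstd : m 1 + m 2 + m 3 ≤ d)
    (hmono : ∀ i j : ℕ, 1 ≤ i → i ≤ j → j ≤ r → m j ≤ m i)
    (hlast : 0 ≤ m r) :
    ¬(d ^ 2 - ∑ i ∈ Finset.Icc 1 r, (m i) ^ 2 < 0 ∧
        0 ≤ 3 * d - ∑ i ∈ Finset.Icc 1 r, m i) ∧
    ¬(d ^ 2 - ∑ i ∈ Finset.Icc 1 r, (m i) ^ 2 = -2 ∧
        -3 * d + ∑ i ∈ Finset.Icc 1 r, m i = 0) ∧
    ¬(d ^ 2 - ∑ i ∈ Finset.Icc 1 r, (m i) ^ 2 = -1 ∧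
        -3 * d + ∑ i ∈ Finset.Icc 1 r, m i = -1) := by
  -- every mᵢ with 1 ≤ i ≤ r is nonnegative
  have hnn : ∀ i, 1 ≤ i → i ≤ r → 0 ≤ m i := fun i h1 h2 =>
    le_trans hlast (hmono i r h1 h2 le_rfl)
  -- split sums at 3
  have hsplit : ∀ f : ℕ → ℝ,
      ∑ i ∈ Finset.Icc 1 r, f i = (f 1 + f 2 + f 3) + ∑ i ∈ Finset.Ioc 3 r, f i := by
    intro f
    have h1 : Finset.Icc 1 r = Finset.Ioc 0 r := by
      rw [← Finset.Icc_add_one_left_eq_Ioc]; rfl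
    have h2 : (∑ i ∈ Finset.Ioc 0 3, f i) + ∑ i ∈ Finset.Ioc 3 r, f i
        = ∑ i ∈ Finset.Ioc 0 r, f i :=
      Finset.sum_Ioc_consecutive f (by norm_num) hr
    have h3 : Finset.Ioc 0 3 = ({1, 2, 3} : Finset ℕ) := by decide
    rw [h1, ← h2, h3]
    simp [Finset.sum_insert, add_assoc]
  -- the tail sum bound : ∑_{3<i≤r} mᵢ² ≤ m₃ * ∑_{3<i≤r} mᵢ
  have htail : ∑ i ∈ Finset.Ioc 3 r, (m i) ^ 2
      ≤ m 3 * ∑ i ∈ Finset.Ioc 3 r, m i := by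
    rw [Finset.mul_sum]
    apply Finset.sum_le_sum
    intro i hi
    rw [Finset.mem_Ioc] at hi
    have h0 : 0 ≤ m i := hnn i (by omega) hi.2
    have h3 : m i ≤ m 3 := hmono 3 i (by norm_num) (by omega) hi.2
    nlinarith
  -- tail sum is nonnegative
  have htnn : 0 ≤ ∑ i ∈ Finset.Ioc 3 r, m i :=
    Finset.sum_nonneg fun i hi => by
      rw [Finset.mem_Ioc] at hi; exact hnn i (by omega) hi.2
  have h12 : m 2 ≤ m 1 := hmono 1 2 le_rfl (by norm_num) (by omega)
  have h23 : m 3 ≤ m 2 := hmono 2 3 (by norm_num) (by norm_num) hr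
  have h3nn : 0 ≤ m 3 := hnn 3 (by norm_num) hr
  -- main claim
  have main : ∀ (_ : d ^ 2 - ∑ i ∈ Finset.Icc 1 r, (m i) ^ 2 < 0)
      (_ : 0 ≤ 3 * d - ∑ i ∈ Finset.Icc 1 r, m i), False := by
    intro hQ hK
    rw [hsplit (fun i => (m i) ^ 2)] at hQ
    rw [hsplit m] at hK
    set T := ∑ i ∈ Finset.Ioc 3 r, m i with hT
    nlinarith [sq_nonneg (d - m 1 - m 2 - m 3), mul_nonneg h3nn htnn,
      mul_nonneg (sub_nonneg.mpr h23) (sub_nonneg.mpr h12),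
      mul_nonneg (sub_nonneg.mpr hstd) (add_nonneg (add_nonneg
        (le_trans h3nn (le_trans h23 h12)) (le_trans h3nn h23)) h3nn)]
  refine ⟨fun h => main h.1 h.2, fun h => main (by rw [h.1]; norm_num) (by linarith [h.2]),
    fun h => main (by rw [h.1]; norm_num) (by linarith [h.2])⟩
end

section
/- Let M be a symmetric negative definite real n×n matrix whose off-diagonal entries are nonnegative (M_{ij} ≥ 0 for all i ≠ j). Then there exists a vector x ∈ ℝ^n with x_i ≥ 0 for every i such that (Mx)_i < 0 for every i. -/
/-!
Since `M` is negative definite it is invertible, so `M x = -1` has a solution `x`; it suffices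
to show `x ≥ 0`. Write `x = x⁺ - x⁻`. The vectors `x⁻` and `x⁺` have disjoint supports, so only
off-diagonal entries of `M` enter `x⁻ ⬝ M x⁺`, which is therefore `≥ 0`. Hence
`x⁻ ⬝ M x⁻ = x⁻ ⬝ M x⁺ - x⁻ ⬝ M x ≥ 0`, and definiteness forces `x⁻ = 0`.
-/

open Matrix

namespace Matrix

variable {ι R : Type*} [Fintype ι]

theorem dotProduct_mulVec_nonneg_of_mul_eq_zero [CommSemiring R] [PartialOrder R]
    [IsOrderedRing R] {M : Matrix ι ι R} (hoff : ∀ i j, i ≠ j → 0 ≤ M i j) {u v : ι → R}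
    (hu : 0 ≤ u) (hv : 0 ≤ v) (huv : ∀ i, u i * v i = 0) : 0 ≤ u ⬝ᵥ M *ᵥ v := by
  refine Finset.sum_nonneg fun i _ => ?_
  rw [mulVec, dotProduct, Finset.mul_sum]
  refine Finset.sum_nonneg fun j _ => ?_
  rcases eq_or_ne i j with rfl | hij
  · rw [mul_left_comm, huv, mul_zero]
  · exact mul_nonneg (hu i) (mul_nonneg (hoff i j hij) (hv j))

theorem mulVec_injective_of_dotProduct_mulVec_neg [CommRing R] [Preorder R] {M : Matrix ι ι R}
    (hneg : ∀ x : ι → R, x ≠ 0 → x ⬝ᵥ M *ᵥ x < 0) : Function.Injective M.mulVec := by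
  intro y z hyz
  by_contra hne
  have := hneg (y - z) (sub_ne_zero.mpr hne)
  rw [mulVec_sub, hyz, sub_self, dotProduct_zero] at this
  exact lt_irrefl 0 this

theorem nonneg_of_mulVec_nonpos [CommRing R] [LinearOrder R] [IsStrictOrderedRing R]
    {M : Matrix ι ι R} (hneg : ∀ x : ι → R, x ≠ 0 → x ⬝ᵥ M *ᵥ x < 0)
    (hoff : ∀ i j, i ≠ j → 0 ≤ M i j) {x : ι → R} (hx : M *ᵥ x ≤ 0) : 0 ≤ x := by
  suffices x⁻ = 0 from negPart_eq_zero.mp this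
  by_contra hne
  have hcross : 0 ≤ x⁻ ⬝ᵥ M *ᵥ x⁺ :=
    dotProduct_mulVec_nonneg_of_mul_eq_zero hoff (negPart_nonneg x) (posPart_nonneg x)
      fun i => by
        rcases le_total (x i) 0 with h | h
        · rw [show x⁺ i = 0 from posPart_eq_zero.mpr h, mul_zero]
        · rw [show x⁻ i = 0 from negPart_eq_zero.mpr h, zero_mul]
  have hx' : x⁻ ⬝ᵥ M *ᵥ x ≤ 0 :=
    Finset.sum_nonpos fun i _ => mul_nonpos_of_nonneg_of_nonpos (negPart_nonneg x i) (hx i)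
  have hsplit : x⁻ ⬝ᵥ M *ᵥ x = x⁻ ⬝ᵥ M *ᵥ x⁺ - x⁻ ⬝ᵥ M *ᵥ x⁻ := by
    rw [← dotProduct_sub, ← mulVec_sub, posPart_sub_negPart]
  linarith [hneg _ hne]

end Matrix

theorem negdef_nonneg_offdiag_exists_nonneg_vector_general
    (n : ℕ) (M : Matrix (Fin n) (Fin n) ℝ)
    (hneg : ∀ x : Fin n → ℝ, x ≠ 0 → x ⬝ᵥ M.mulVec x < 0)
    (hoff : ∀ i j : Fin n, i ≠ j → 0 ≤ M i j) :
    ∃ x : Fin n → ℝ, (∀ i, 0 ≤ x i) ∧ ∀ i, M.mulVec x i < 0 := by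
  have hunit : IsUnit M :=
    mulVec_injective_iff_isUnit.mp (mulVec_injective_of_dotProduct_mulVec_neg hneg)
  obtain ⟨x, hx⟩ := mulVec_surjective_iff_isUnit.mpr hunit (-1)
  have hMx : M *ᵥ x ≤ 0 := by rw [hx]; exact fun _ => by norm_num
  refine ⟨x, nonneg_of_mulVec_nonpos hneg hoff hMx, fun i => ?_⟩
  rw [hx]
  norm_num

/-- **Existence of an "effective contracting" vector.**
If `M` is a symmetric negative definite real `n × n` matrix with nonnegative
off-diagonal entries, then there is a vector `x` with nonnegative entries such
that `(M x)ᵢ < 0` for every `i`. -/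
theorem negdef_nonneg_offdiag_exists_nonneg_vector
    (n : ℕ) (M : Matrix (Fin n) (Fin n) ℝ) (hsym : M.IsSymm)
    (hneg : ∀ x : Fin n → ℝ, x ≠ 0 → x ⬝ᵥ M.mulVec x < 0)
    (hoff : ∀ i j : Fin n, i ≠ j → 0 ≤ M i j) :
    ∃ x : Fin n → ℝ, (∀ i, 0 ≤ x i) ∧ ∀ i, M.mulVec x i < 0 :=
  negdef_nonneg_offdiag_exists_nonneg_vector_general n M hneg hoff
end

section
/- Let M be a symmetric negative definite real n×n matrix whose off-diagonal entries are nonnegative (M_{ij} ≥ 0 for all i ≠ j). If x ∈ ℝ^n satisfies (Mx)_i ≤ 0 for every i, then x_i ≥ 0 for every i. -/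
/-!
Write `x = x⁺ - x⁻`. The parts `x⁺` and `x⁻` are nonnegative with disjoint supports, so only
off-diagonal entries of `M` contribute to `x⁻ ⬝ᵥ M *ᵥ x⁺`, which is therefore `≥ 0`; and
`x⁻ ⬝ᵥ M *ᵥ x ≤ 0` because `x⁻ ≥ 0` and `M *ᵥ x ≤ 0`. Hence
`x⁻ ⬝ᵥ M *ᵥ x⁻ = x⁻ ⬝ᵥ M *ᵥ x⁺ - x⁻ ⬝ᵥ M *ᵥ x ≥ 0`, and negative definiteness forces `x⁻ = 0`.
-/

open Matrix

theorem dotProduct_mulVec_nonneg_of_offDiag_nonneg {ι R : Type*} [Fintype ι] [CommRing R]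
    [PartialOrder R] [IsOrderedRing R] {M : Matrix ι ι R} (hoff : ∀ i j, i ≠ j → 0 ≤ M i j)
    {y z : ι → R} (hy : 0 ≤ y) (hz : 0 ≤ z) (hyz : ∀ i, y i = 0 ∨ z i = 0) :
    0 ≤ y ⬝ᵥ M *ᵥ z := by
  simp only [dotProduct, mulVec, Finset.mul_sum]
  refine Finset.sum_nonneg fun i _ => Finset.sum_nonneg fun j _ => ?_
  obtain rfl | hij := eq_or_ne i j
  · rcases hyz i with h | h <;> simp [h]
  · exact mul_nonneg (hy i) (mul_nonneg (hoff i j hij) (hz j))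

theorem nonneg_of_mulVec_nonpos_of_offDiag_nonneg {ι : Type*} [Fintype ι] {M : Matrix ι ι ℝ}
    (hneg : ∀ y : ι → ℝ, y ≠ 0 → y ⬝ᵥ M *ᵥ y < 0) (hoff : ∀ i j, i ≠ j → 0 ≤ M i j)
    {x : ι → ℝ} (hx : M *ᵥ x ≤ 0) : 0 ≤ x := by
  rw [← negPart_eq_zero]
  by_contra hx_neg
  have hdisj : ∀ i, x⁻ i = 0 ∨ x⁺ i = 0 := fun i =>
    (le_total 0 (x i)).imp negPart_eq_zero.2 posPart_eq_zero.2
  have hpos : 0 ≤ x⁻ ⬝ᵥ M *ᵥ x⁺ :=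
    dotProduct_mulVec_nonneg_of_offDiag_nonneg hoff (negPart_nonneg x) (posPart_nonneg x) hdisj
  have hnonpos : x⁻ ⬝ᵥ M *ᵥ x ≤ 0 :=
    Finset.sum_nonpos fun i _ => mul_nonpos_of_nonneg_of_nonpos (negPart_nonneg x i) (hx i)
  have hsplit : x⁻ ⬝ᵥ M *ᵥ x⁻ = x⁻ ⬝ᵥ M *ᵥ x⁺ - x⁻ ⬝ᵥ M *ᵥ x := by
    rw [← dotProduct_sub, ← mulVec_sub]
    congr 2
    linear_combination -posPart_sub_negPart x
  linarith [hneg _ hx_neg]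

theorem negdef_nonneg_offdiag_nonpos_image_nonneg_general
    (n : ℕ) (M : Matrix (Fin n) (Fin n) ℝ)
    (hneg : ∀ y : Fin n → ℝ, y ≠ 0 → y ⬝ᵥ M.mulVec y < 0)
    (hoff : ∀ i j : Fin n, i ≠ j → 0 ≤ M i j)
    (x : Fin n → ℝ) (hx : ∀ i, M.mulVec x i ≤ 0) :
    ∀ i, 0 ≤ x i :=
  nonneg_of_mulVec_nonpos_of_offDiag_nonneg hneg hoff hx

/-- **Effectivity step.**
If `M` is a symmetric negative definite real `n × n` matrix with nonnegative
off-diagonal entries and `x` satisfies `(M x)ᵢ ≤ 0` for every `i`, then all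
entries of `x` are nonnegative. -/
theorem negdef_nonneg_offdiag_nonpos_image_nonneg
    (n : ℕ) (M : Matrix (Fin n) (Fin n) ℝ) (hsym : M.IsSymm)
    (hneg : ∀ y : Fin n → ℝ, y ≠ 0 → y ⬝ᵥ M.mulVec y < 0)
    (hoff : ∀ i j : Fin n, i ≠ j → 0 ≤ M i j)
    (x : Fin n → ℝ) (hx : ∀ i, M.mulVec x i ≤ 0) :
    ∀ i, 0 ≤ x i :=
  negdef_nonneg_offdiag_nonpos_image_nonneg_general n M hneg hoff x hx
end

section
/- Let r ≥ 2 and identify divisor classes D = dH − Σ_{i=1}^r m_i E_i with vectors (d, m_1, …, m_r) ∈ ℝ^{1+r}. A vector (d, m_1, …, m_r) satisfies m_k ≥ 0 for all k and d ≥ m_i + m_j for all i < j if and only if it lies in the convex cone generated by the finitely many vectors H = (1, 0, …, 0), H − E_i = (1, δ_{i}) for 1 ≤ i ≤ r (the vector with d = 1, m_i = 1 and all other coordinates 0), and 2H − Σ_{i∈I} E_i = (2, 1_I) for each subset I ⊆ {1, …, r} (the vector with d = 2, m_i = 1 for i ∈ I and m_i = 0 otherwise). -/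
/-!
Let `m i₀` be the largest entry of `m` and `m j₀` the largest of the others. Cutting the top entry
down to `m j₀` leaves a vector with entries in `[0, m j₀]`, which by the layer-cake decomposition is
a nonnegative combination `∑ t_I 1_I` of total weight `m j₀`. Hence
`D = (d - m i₀ - m j₀) H + (m i₀ - m j₀)(H - E_{i₀}) + ∑ t_I (2H - ∑_{i ∈ I} Eᵢ)`,
and `d - m i₀ - m j₀ ≥ 0` is one of the pair inequalities.
-/

open Finset

/-- The weight `M - max v` goes to the empty set. -/
theorem exists_layer_decomposition {ι : Type*} [Fintype ι] [DecidableEq ι] {v : ι → ℝ} {M : ℝ}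
    (hM : 0 ≤ M) (hv0 : ∀ i, 0 ≤ v i) (hvM : ∀ i, v i ≤ M) :
    ∃ t : Finset ι → ℝ, (∀ I, 0 ≤ t I) ∧ ∑ I, t I = M ∧ ∀ k, v k = ∑ I with k ∈ I, t I := by
  induction hS : ({i | 0 < v i} : Finset ι) using Finset.strongInduction generalizing v M with
  | H S ih =>
  have hv_off : ∀ i ∉ S, v i = 0 := fun i hi =>
    le_antisymm (not_lt.1 fun h => hi (hS ▸ mem_filter.2 ⟨mem_univ i, h⟩)) (hv0 i)
  rcases S.eq_empty_or_nonempty with rfl | hne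
  · exact ⟨Pi.single ∅ M, (Pi.single_nonneg.2 hM : (0 : Finset ι → ℝ) ≤ Pi.single ∅ M),
      by simp [sum_pi_single'], fun k => by simp [hv_off k (notMem_empty k), sum_pi_single']⟩
  -- peel off the layer `S` at the height of the smallest positive entry
  obtain ⟨i₀, hi₀, hmin⟩ := S.exists_min_image v hne
  have hε : 0 < v i₀ := by rw [← hS] at hi₀; exact (mem_filter.1 hi₀).2
  set v' : ι → ℝ := fun i => v i - if i ∈ S then v i₀ else 0 with hv'
  have hv'0 : ∀ i, 0 ≤ v' i := fun i => by
    by_cases hi : i ∈ S <;> simp only [hv', hi, if_true, if_false]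
    · linarith [hmin i hi]
    · linarith [hv0 i]
  have hv'M : ∀ i, v' i ≤ M - v i₀ := fun i => by
    by_cases hi : i ∈ S <;> simp only [hv', hi, if_true, if_false]
    · linarith [hvM i]
    · linarith [hv_off i hi, hvM i₀]
  have hT : ({i | 0 < v' i} : Finset ι) ⊂ S := by
    refine (ssubset_iff_of_subset fun i hi => ?_).2 ⟨i₀, hi₀, by simp [hv', hi₀]⟩
    by_contra hiS
    simp [hv', hiS, hv_off i hiS] at hi
  obtain ⟨t, ht0, htM, hvt⟩ := ih _ hT (by linarith [hvM i₀]) hv'0 hv'M rfl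
  have hS0 : (0 : Finset ι → ℝ) ≤ Pi.single S (v i₀) := Pi.single_nonneg.2 hε.le
  refine ⟨t + Pi.single S (v i₀), fun I => add_nonneg (ht0 I) (hS0 I), ?_, fun k => ?_⟩
  · simp [sum_add_distrib, htM, sum_pi_single']
  · simp only [Pi.add_apply, sum_add_distrib, ← hvt k, sum_pi_single', mem_filter, mem_univ,
      true_and, hv', sub_add_cancel]

theorem exists_nef_decomposition {ι : Type*} [Fintype ι] [DecidableEq ι] [Nontrivial ι]
    {d : ℝ} {m : ι → ℝ} (hm : ∀ k, 0 ≤ m k) (hpair : ∀ i j, i ≠ j → m i + m j ≤ d) :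
    ∃ (a : ℝ) (c : ι → ℝ) (t : Finset ι → ℝ),
      0 ≤ a ∧ (∀ i, 0 ≤ c i) ∧ (∀ I, 0 ≤ t I) ∧
      d = a + (∑ i, c i) + (∑ I, 2 * t I) ∧ ∀ k, m k = c k + ∑ I with k ∈ I, t I := by
  obtain ⟨i₀, hmax⟩ := Finite.exists_max m
  obtain ⟨j, hj⟩ := exists_ne i₀
  obtain ⟨j₀, hj₀, hsecond⟩ :=
    (univ.erase i₀).exists_max_image m ⟨j, mem_erase.2 ⟨hj, mem_univ j⟩⟩
  have hle : ∀ k, k ≠ i₀ → m k ≤ m j₀ := fun k hk => hsecond k (mem_erase.2 ⟨hk, mem_univ k⟩)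
  have htop : m i₀ + m j₀ ≤ d := hpair i₀ j₀ (ne_of_mem_erase hj₀).symm
  obtain ⟨t, ht0, hts, hvt⟩ := exists_layer_decomposition (v := Function.update m i₀ (m j₀))
    (hm j₀) (fun k => by rcases eq_or_ne k i₀ with rfl | hk <;> simp [*])
    (fun k => by rcases eq_or_ne k i₀ with rfl | hk <;> simp [*])
  have hc : (0 : ι → ℝ) ≤ Pi.single i₀ (m i₀ - m j₀) :=
    Pi.single_nonneg.2 (by linarith [hmax j₀])
  refine ⟨d - m i₀ - m j₀, Pi.single i₀ (m i₀ - m j₀), t, by linarith, hc, ht0, ?_, fun k => ?_⟩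
  · rw [← mul_sum, hts, sum_pi_single']
    simp only [mem_univ, if_true]
    ring
  · rw [← hvt k]
    rcases eq_or_ne k i₀ with rfl | hk <;> simp [*]

theorem nef_of_decomposition {ι : Type*} [Fintype ι] [DecidableEq ι] {a : ℝ} {c : ι → ℝ}
    {t : Finset ι → ℝ}
    (ha : 0 ≤ a) (hc : ∀ i, 0 ≤ c i) (ht : ∀ I, 0 ≤ t I) :
    (∀ k, 0 ≤ c k + ∑ I with k ∈ I, t I) ∧
      ∀ i j, i ≠ j → (c i + ∑ I with i ∈ I, t I) + (c j + ∑ I with j ∈ I, t I) ≤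
        a + (∑ i, c i) + (∑ I, 2 * t I) := by
  have ht_le : ∀ k, ∑ I with k ∈ I, t I ≤ ∑ I, t I := fun k => sum_le_univ_sum_of_nonneg ht
  refine ⟨fun k => add_nonneg (hc k) (sum_nonneg fun I _ => ht I), fun i j hij => ?_⟩
  have hcij : c i + c j ≤ ∑ k, c k := add_le_sum (fun k _ => hc k) (mem_univ i) (mem_univ j) hij
  rw [← mul_sum]
  linarith [ht_le i, ht_le j]

/-- **Polyhedral duality for the nef cone generators.**
Identify a divisor class `D = d·H − ∑ mᵢ·Eᵢ` with `(d, m) ∈ ℝ × (Fin r → ℝ)`.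
Then `mₖ ≥ 0` for all `k` and `d ≥ mᵢ + mⱼ` for all `i < j` if and only if
`(d, m)` lies in the convex cone generated by `H = (1, 0)`,
`H − Eᵢ = (1, δᵢ)` and `2H − ∑_{i ∈ I} Eᵢ = (2, 1_I)` for `I ⊆ {1, …, r}`:
i.e. there are nonnegative coefficients `a`, `c i`, `t I` with
`d = a + ∑ c i + ∑_I 2·t I` and `m k = c k + ∑_{I ∋ k} t I`. -/
theorem nef_cone_duality (r : ℕ) (hr : 2 ≤ r) (d : ℝ) (m : Fin r → ℝ) :
    ((∀ k, 0 ≤ m k) ∧ ∀ i j : Fin r, i < j → m i + m j ≤ d) ↔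
    ∃ (a : ℝ) (c : Fin r → ℝ) (t : Finset (Fin r) → ℝ),
      0 ≤ a ∧ (∀ i, 0 ≤ c i) ∧ (∀ I, 0 ≤ t I) ∧
      d = a + (∑ i, c i) + (∑ I : Finset (Fin r), 2 * t I) ∧
      ∀ k : Fin r, m k = c k + ∑ I ∈ Finset.univ.filter (fun I : Finset (Fin r) => k ∈ I), t I := by
  constructor
  · rintro ⟨hm, hlt⟩
    have : Nontrivial (Fin r) := Fin.nontrivial_iff_two_le.2 hr
    refine exists_nef_decomposition hm fun i j hij => ?_
    rcases hij.lt_or_gt with h | h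
    · exact hlt i j h
    · linarith [hlt j i h]
  · rintro ⟨a, c, t, ha, hc, ht, rfl, hmk⟩
    obtain rfl : m = fun k => c k + ∑ I with k ∈ I, t I := funext hmk
    obtain ⟨hnonneg, hpair⟩ := nef_of_decomposition ha hc ht
    exact ⟨hnonneg, fun i j hij => hpair i j hij.ne⟩
end
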